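/- arXiv:1202.0967 — 2 statements merged into one kernel-verified Lean document; each statement's English description precedes it below -/
import Mathlib

section
/- Fix L > 0, F > 0 and a > 1. For the unique fixed configuration of N particles on the segment [0, L] with x_1 = 0, x_N = L and constant force F, write Δ_k = (L/(N−1))(1 + δ_k) and q = (L/(N−1))^a F. Then as N → ∞, δ_{N−1} = −a^{−1} q (N/2 − 1) + (a^{−1}(a^{−1}+1)/12) q^2 (N−2)(N−3) + J_{N−1}(N), where J_{N−1}(N) = o(N^{−2a+2}). -/
open Real Filter Set Asymptotics

/-- The repulsion force `f(r) = r^{-a}`. -/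
noncomputable def fpow (a r : ℝ) : ℝ := r ^ (-a)

/-- The clockwise gaps of a configuration `x 1 < ... < x N` on the circle of
circumference `L`: `Δ k = x (k+1) - x k` for `1 ≤ k ≤ N-1` and `Δ N = L - x N + x 1`. -/
def cgap (L : ℝ) (N : ℕ) (x : ℕ → ℝ) (k : ℕ) : ℝ :=
  if k < N then x (k + 1) - x k else L - x N + x 1

/-- A configuration of `N` particles on the circle of circumference `L`,
variant with `0 ≤ x 1 < ... < x N < L`. -/
def CircleConfigA (L : ℝ) (N : ℕ) (x : ℕ → ℝ) : Prop :=
  0 ≤ x 1 ∧ (∀ k, 1 ≤ k → k < N → x k < x (k + 1)) ∧ x N < L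

/-- A fixed (critical) configuration on the circle (variant `0 ≤ x 1`, `x N < L`):
`f(Δ (k-1)) + F (x k) - f(Δ k) = 0` for `k = 1, ..., N`, with `Δ 0 = Δ N`. -/
def CircleFixedA (a L : ℝ) (F : ℝ → ℝ) (N : ℕ) (x : ℕ → ℝ) : Prop :=
  CircleConfigA L N x ∧
  ∀ k, 1 ≤ k → k ≤ N →
    fpow a (cgap L N x (if k = 1 then N else k - 1)) + F (x k) - fpow a (cgap L N x k) = 0

/-- A configuration of `N` particles on the circle of circumference `L`,
variant with `0 < x 1 < ... < x N ≤ L`. -/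
def CircleConfigB (L : ℝ) (N : ℕ) (x : ℕ → ℝ) : Prop :=
  0 < x 1 ∧ (∀ k, 1 ≤ k → k < N → x k < x (k + 1)) ∧ x N ≤ L

/-- A fixed (critical) configuration on the circle (variant `0 < x 1`, `x N ≤ L`):
`f(Δ (k-1)) + F (x k) - f(Δ k) = 0` for `k = 1, ..., N`, with `Δ 0 = Δ N`. -/
def CircleFixedB (a L : ℝ) (F : ℝ → ℝ) (N : ℕ) (x : ℕ → ℝ) : Prop :=
  CircleConfigB L N x ∧
  ∀ k, 1 ≤ k → k ≤ N →
    fpow a (cgap L N x (if k = 1 then N else k - 1)) + F (x k) - fpow a (cgap L N x k) = 0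

/-- A fixed configuration of `N` particles on the segment `[0, L]` with constant
force `F`, completely inelastic boundary conditions, and `x 1 = 0`, `x N = L`. -/
def SegmentFixed (a L F : ℝ) (N : ℕ) (x : ℕ → ℝ) : Prop :=
  x 1 = 0 ∧ x N = L ∧ (∀ k, 1 ≤ k → k < N → x k < x (k + 1)) ∧
  (∀ k, 2 ≤ k → k ≤ N - 1 → fpow a (x k - x (k - 1)) + F - fpow a (x (k + 1) - x k) = 0) ∧
  F - fpow a (x 2) ≤ 0 ∧ 0 ≤ F + fpow a (L - x (N - 1))

/-!
Put `M = N - 1`, `h = L / M`, `q = h ^ a * F` and `b = 1 / a`. Force balance gives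
`Δ_k ^ (-a) = Δ_1 ^ (-a) + (k - 1) F`, so `v_k = h ^ a * Δ_k ^ (-a) - 1` is an arithmetic
progression of step `q`, and `1 + δ_k = Δ_k / h = (1 + v_k) ^ (-b)`. The constraint `∑ Δ_k = L`
reads `∑ δ_k = 0`; as `δ_k` has the sign of `-v_k`, the progression crosses zero, so
`|v_k| ≤ p := M q`. Summing the expansion `(1 + v) ^ (-b) = 1 - b v + c v² + O(v³)`,
`c = b (b + 1) / 2`, over `k` shows that the mean `η` of the progression satisfies
`b η = c η² + c q² (M² - 1) / 12 + O(p³)`, hence `η = O(p²)`; substituting into the expansion of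
`δ_M` leaves an error `O(p³)`. Finally `p ≍ N ^ (1 - a)`, and `p³ = o(N ^ (2 - 2a))` as `a > 1`.
-/

open Finset Topology

lemma abs_sub_le_mul_abs_pow_succ {g g' : ℝ → ℝ} {r C v : ℝ} {n : ℕ} (hC : 0 ≤ C)
    (hg : ∀ u, |u| ≤ r → HasDerivAt g (g' u) u) (hg' : ∀ u, |u| ≤ r → |g' u| ≤ C * |u| ^ n)
    (hv : |v| ≤ r) : |g v - g 0| ≤ C * |v| ^ (n + 1) := by
  have hball : ∀ u ∈ Metric.closedBall (0 : ℝ) |v|, |u| ≤ |v| := by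
    simp [Real.norm_eq_abs]
  have key := (convex_closedBall (0 : ℝ) |v|).norm_image_sub_le_of_norm_hasDerivWithin_le
    (fun u hu => (hg u ((hball u hu).trans hv)).hasDerivWithinAt)
    (fun u hu => (hg' u ((hball u hu).trans hv)).trans
      (mul_le_mul_of_nonneg_left (pow_le_pow_left₀ (abs_nonneg u) (hball u hu) n) hC))
    (Metric.mem_closedBall_self (abs_nonneg v)) (show v ∈ Metric.closedBall (0 : ℝ) |v| by simp)
  simpa [Real.norm_eq_abs, pow_succ, mul_assoc] using key

lemma one_add_rpow_neg_le_two_rpow {p u : ℝ} (hu : |u| ≤ 1 / 2) (hp : 0 ≤ p) :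
    (1 + u) ^ (-p) ≤ 2 ^ p := by
  have h : 1 / 2 ≤ 1 + u := by linarith [(abs_le.1 hu).1]
  calc (1 + u) ^ (-p) ≤ (1 / 2) ^ (-p) := rpow_le_rpow_of_nonpos (by norm_num) h (by linarith)
    _ = 2 ^ p := by rw [one_div, inv_rpow zero_le_two, rpow_neg zero_le_two, inv_inv]

lemma hasDerivAt_one_add_rpow {p u : ℝ} (hu : 0 < 1 + u) :
    HasDerivAt (fun t => (1 + t) ^ p) (p * (1 + u) ^ (p - 1)) u := by
  simpa using ((hasDerivAt_id u).const_add 1).rpow_const (p := p) (Or.inl hu.ne')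

lemma exists_abs_one_add_rpow_neg_sub_quadratic_le {b : ℝ} (hb : 0 < b) :
    ∃ K, 0 ≤ K ∧ ∀ v, |v| ≤ 1 / 2 →
      |(1 + v) ^ (-b) - (1 - b * v + b * (b + 1) / 2 * v ^ 2)| ≤ K * |v| ^ 3 := by
  set K := b * (b + 1) * (b + 2) * 2 ^ (b + 3)
  have hK : 0 ≤ K := by positivity
  have hpos : ∀ u : ℝ, |u| ≤ 1 / 2 → 0 < 1 + u := fun u hu => by linarith [(abs_le.1 hu).1]
  -- the remainders of order two, one and zero; each is the derivative of the next
  have h₂ : ∀ u, |u| ≤ 1 / 2 → |b * (b + 1) * ((1 + u) ^ (-b - 2) - 1)| ≤ K * |u| ^ 1 := by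
    intro u hu
    have := abs_sub_le_mul_abs_pow_succ (g := fun t => b * (b + 1) * (1 + t) ^ (-b - 2)) (n := 0)
      hK (fun w hw => (hasDerivAt_one_add_rpow (hpos w hw)).const_mul (b * (b + 1)))
      (fun w hw => ?_) hu
    · simpa [mul_sub] using this
    have h3 := one_add_rpow_neg_le_two_rpow hw (p := b + 3) (by positivity)
    have h4 := rpow_nonneg (hpos w hw).le (-(b + 3))
    rw [show b * (b + 1) * ((-b - 2) * (1 + w) ^ (-b - 2 - 1))
        = -(b * (b + 1) * (b + 2) * (1 + w) ^ (-(b + 3))) by ring_nf, abs_neg,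
      abs_of_nonneg (by positivity), pow_zero, mul_one]
    exact mul_le_mul_of_nonneg_left h3 (by positivity)
  have h₁ : ∀ u, |u| ≤ 1 / 2 →
      |-b * ((1 + u) ^ (-b - 1) - 1) - b * (b + 1) * u| ≤ K * |u| ^ 2 := by
    intro u hu
    have := abs_sub_le_mul_abs_pow_succ (n := 1) hK
      (g := fun t => -b * ((1 + t) ^ (-b - 1) - 1) - b * (b + 1) * t) (fun w hw => ?_) h₂ hu
    · simpa using this
    refine ((((hasDerivAt_one_add_rpow (hpos w hw)).sub_const 1).const_mul (-b)).sub
      ((hasDerivAt_id' w).const_mul (b * (b + 1)))).congr_deriv ?_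
    ring_nf
  refine ⟨K, hK, fun v hv => ?_⟩
  have := abs_sub_le_mul_abs_pow_succ (n := 2) hK
    (g := fun t => (1 + t) ^ (-b) - (1 - b * t + b * (b + 1) / 2 * t ^ 2)) (fun w hw => ?_) h₁ hv
  · simpa using this
  refine ((hasDerivAt_one_add_rpow (hpos w hw)).sub
    ((((hasDerivAt_id' w).const_mul b).const_sub 1).add
      ((hasDerivAt_pow 2 w).const_mul (b * (b + 1) / 2)))).congr_deriv ?_
  ring_nf

lemma sum_range_natCast (M : ℕ) : ∑ k ∈ range M, (k : ℝ) = M * (M - 1) / 2 := by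
  induction M with
  | zero => simp
  | succ M ih => rw [sum_range_succ, ih]; push_cast; ring

lemma sum_range_natCast_sq (M : ℕ) :
    ∑ k ∈ range M, (k : ℝ) ^ 2 = M * (M - 1) * (2 * M - 1) / 6 := by
  induction M with
  | zero => simp
  | succ M ih => rw [sum_range_succ, ih]; push_cast; ring

lemma sum_range_quadratic_progression (b c v q : ℝ) (M : ℕ) :
    ∑ k ∈ range M, (-b * (v + k * q) + c * (v + k * q) ^ 2) =
      M * (-b * (v + (M - 1) * q / 2) + c * (v + (M - 1) * q / 2) ^ 2
        + c * q ^ 2 * (M ^ 2 - 1) / 12) := by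
  have h : ∀ k : ℕ, -b * (v + k * q) + c * (v + k * q) ^ 2
      = (-b * v + c * v ^ 2) + (2 * c * v * q - b * q) * k + c * q ^ 2 * (k : ℝ) ^ 2 :=
    fun k => by ring
  simp only [h, sum_add_distrib, ← mul_sum, sum_const, card_range, nsmul_eq_mul,
    sum_range_natCast, sum_range_natCast_sq]
  ring

lemma abs_mean_le_of_sum_rpow_neg_sub_one_eq_zero {b v q : ℝ} {M : ℕ} (hb : 0 < b)
    (hM : 0 < M) (hq : 0 ≤ q) (hpos : ∀ k < M, 0 < 1 + (v + k * q))
    (hsum : ∑ k ∈ range M, ((1 + (v + k * q)) ^ (-b) - 1) = 0) :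
    |v + (M - 1) * q / 2| ≤ (M - 1) * q / 2 := by
  have hk : ∀ k ∈ range M, v ≤ v + k * q ∧ v + k * q ≤ v + (M - 1) * q := by
    intro k hk
    have : (k : ℝ) ≤ M - 1 := by
      rw [le_sub_iff_add_le]; exact_mod_cast mem_range.1 hk
    constructor <;> nlinarith [(k.cast_nonneg : (0 : ℝ) ≤ k)]
  have hne : (range M).Nonempty := nonempty_range_iff.2 hM.ne'
  have hfirst : v ≤ 0 := by
    by_contra! h
    refine (sum_neg (fun k hk' => ?_) hne).ne hsum
    exact sub_neg.2 (rpow_lt_one_of_one_lt_of_neg (by linarith [(hk k hk').1]) (by linarith))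
  have hlast : 0 ≤ v + (M - 1) * q := by
    by_contra! h
    refine (sum_pos (fun k hk' => ?_) hne).ne' hsum
    exact sub_pos.2 (one_lt_rpow_of_pos_of_lt_one_of_neg (hpos k (mem_range.1 hk'))
      (by linarith [(hk k hk').2]) (by linarith))
  exact abs_le.2 ⟨by linarith, by linarith⟩

lemma abs_add_mul_le_of_abs_mean_le {v q k m : ℝ} (hq : 0 ≤ q) (hk : 0 ≤ k) (hkm : k ≤ m)
    (h : |v + m * q / 2| ≤ m * q / 2) : |v + k * q| ≤ m * q := by
  obtain ⟨h₁, h₂⟩ := abs_le.1 h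
  exact abs_le.2 ⟨by nlinarith, by nlinarith⟩

lemma abs_sum_range_div_le {g : ℕ → ℝ} {M : ℕ} {B : ℝ} (hM : 0 < M)
    (hg : ∀ k < M, |g k| ≤ B) : |(∑ k ∈ range M, g k) / M| ≤ B := by
  rw [abs_div, Nat.abs_cast, div_le_iff₀ (by positivity)]
  calc |∑ k ∈ range M, g k| ≤ ∑ k ∈ range M, B :=
        (abs_sum_le_sum_abs _ _).trans (sum_le_sum fun k hk => hg k (mem_range.1 hk))
    _ = B * M := by simp [mul_comm]

lemma abs_le_of_mul_eq_mul_sq_add {b c η p R A : ℝ} (hb : 0 < b) (hc : 0 ≤ c) (hη : |η| ≤ p)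
    (hcp : c * p ≤ b / 2) (h : b * η = c * η ^ 2 + R) (hR : |R| ≤ A) : |η| ≤ 2 * A / b := by
  have : b * |η| ≤ b / 2 * |η| + A :=
    calc b * |η| = |c * η ^ 2 + R| := by rw [← h, abs_mul, abs_of_pos hb]
      _ ≤ c * η ^ 2 + A := (abs_add_le _ _).trans (by rw [abs_of_nonneg (by positivity)]; linarith)
      _ ≤ c * p * |η| + A := by
        have := mul_le_mul_of_nonneg_left hη (mul_nonneg hc (abs_nonneg η))
        rw [← sq_abs]
        linarith
      _ ≤ b / 2 * |η| + A := by gcongr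
  rw [le_div_iff₀ hb]
  linarith


lemma abs_sub_add_mul_le_of_mul_eq {b c K p s η Q E r : ℝ} (hb : 0 < b) (hc : 0 ≤ c)
    (hK : 0 ≤ K) (hp : p ≤ 1) (hcp : c * p ≤ b / 2) (hs : s ≤ p / 2) (hη : |η| ≤ s)
    (hQ : 0 ≤ Q) (hQp : Q ≤ p ^ 2) (hE : |E| ≤ K * p ^ 3) (hr : |r| ≤ K * p ^ 3)
    (hmean : b * η = c * η ^ 2 + (c * Q / 12 + E)) :
    |r - E + 2 * c * s * η| ≤ (2 * K + c * (2 * (c / 12 + K) / b)) * p ^ 3 := by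
  have hs0 : 0 ≤ s := (abs_nonneg η).trans hη
  have hp0 : 0 ≤ p := by linarith
  -- a first-order bound on `η` is improved to a second-order one through `hmean`
  have hη2 : |η| ≤ 2 * ((c / 12 + K) * p ^ 2) / b := by
    refine abs_le_of_mul_eq_mul_sq_add hb hc (hη.trans (by linarith)) hcp hmean ?_
    have hp3 : p ^ 3 ≤ p ^ 2 := pow_le_pow_of_le_one hp0 hp (by norm_num)
    refine (abs_add_le _ _).trans ?_
    rw [abs_of_nonneg (by positivity)]
    nlinarith [mul_le_mul_of_nonneg_left hQp hc]
  have hsη : |2 * c * s * η| ≤ c * (2 * (c / 12 + K) / b) * p ^ 3 := by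
    rw [abs_mul, abs_of_nonneg (by positivity)]
    calc 2 * c * s * |η| ≤ 2 * c * (p / 2) * (2 * ((c / 12 + K) * p ^ 2) / b) := by gcongr
      _ = c * (2 * (c / 12 + K) / b) * p ^ 3 := by ring
  calc |r - E + 2 * c * s * η| ≤ |r| + |E| + |2 * c * s * η| :=
        (abs_add_le _ _).trans (add_le_add_left (abs_sub _ _) _)
    _ ≤ _ := by linarith

lemma mul_mean_eq_of_sum_eq_zero {f : ℝ → ℝ} {b c v q : ℝ} {M : ℕ} (hM : 0 < M)
    (hsum : ∑ k ∈ range M, (f (v + k * q) - 1) = 0) :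
    b * (v + (M - 1) * q / 2) = c * (v + (M - 1) * q / 2) ^ 2 + (c * q ^ 2 * (M ^ 2 - 1) / 12
      + (∑ k ∈ range M, (f (v + k * q) - (1 - b * (v + k * q) + c * (v + k * q) ^ 2))) / M) := by
  have hsplit : ∑ k ∈ range M, (f (v + k * q) - 1)
      = ∑ k ∈ range M, (-b * (v + k * q) + c * (v + k * q) ^ 2)
        + ∑ k ∈ range M, (f (v + k * q) - (1 - b * (v + k * q) + c * (v + k * q) ^ 2)) := by
    rw [← sum_add_distrib]
    exact sum_congr rfl fun k _ => by ring
  rw [hsplit, sum_range_quadratic_progression] at hsum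
  generalize ∑ k ∈ range M, (f (v + k * q) - (1 - b * (v + k * q) + c * (v + k * q) ^ 2)) = S
    at hsum ⊢
  rw [eq_neg_of_add_eq_zero_right hsum, neg_div, mul_div_cancel_left₀ _ (by positivity)]
  ring

theorem exists_abs_last_term_sub_expansion_le {b : ℝ} (hb : 0 < b) :
    ∃ C ε, 0 < ε ∧ ∀ (M : ℕ) (v q : ℝ), 0 < M → 0 ≤ q → M * q ≤ ε →
      (∀ k < M, 0 < 1 + (v + k * q)) → ∑ k ∈ range M, ((1 + (v + k * q)) ^ (-b) - 1) = 0 →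
      |(1 + (v + (M - 1) * q)) ^ (-b) - 1 + b * q * (M - 1) / 2
          - b * (b + 1) / 12 * q ^ 2 * (M - 1) * (M - 2)| ≤ C * (M * q) ^ 3 := by
  obtain ⟨K, hK, htaylor⟩ := exists_abs_one_add_rpow_neg_sub_quadratic_le hb
  set c := b * (b + 1) / 2 with hc
  refine ⟨2 * K + c * (2 * (c / 12 + K) / b), min (1 / 2) (1 / (b + 1)), by positivity, ?_⟩
  intro M v q hM hq hε hpos hsum
  set p := (M : ℝ) * q
  have hp2 : p ≤ 1 / 2 := hε.trans (min_le_left _ _)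
  have hcp : c * p ≤ b / 2 := by
    have := hε.trans (min_le_right _ _)
    rw [le_div_iff₀ (by positivity)] at this
    rw [hc]
    nlinarith
  have hM1 : (1 : ℝ) ≤ M := by exact_mod_cast hM
  set s := (M - 1) * q / 2
  have hs : s ≤ p / 2 := by simp only [s, p]; nlinarith
  set η := v + s
  have hη : |η| ≤ s := abs_mean_le_of_sum_rpow_neg_sub_one_eq_zero hb hM hq hpos hsum
  have hw : ∀ k : ℝ, 0 ≤ k → k ≤ M - 1 → |v + k * q| ≤ p := fun k hk hk' =>
    (abs_add_mul_le_of_abs_mean_le hq hk hk' hη).trans (by simp only [p]; nlinarith)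
  set φ : ℝ → ℝ := fun w => (1 + w) ^ (-b) - (1 - b * w + c * w ^ 2)
  have hφ : ∀ w, |w| ≤ p → |φ w| ≤ K * p ^ 3 := fun w hw =>
    (htaylor w (hw.trans hp2)).trans (by gcongr)
  set E := (∑ k ∈ range M, φ (v + k * q)) / M
  have hE : |E| ≤ K * p ^ 3 :=
    abs_sum_range_div_le (g := fun k => φ (v + k * q)) hM fun k hk =>
      hφ _ (hw k k.cast_nonneg (by rw [le_sub_iff_add_le]; exact_mod_cast hk))
  have hmean : b * η = c * η ^ 2 + (c * (q ^ 2 * (M ^ 2 - 1)) / 12 + E) := by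
    rw [← mul_assoc]
    exact mul_mean_eq_of_sum_eq_zero (f := fun w => (1 + w) ^ (-b)) (b := b) (c := c) hM hsum
  have hexpand : (1 + (v + (M - 1) * q)) ^ (-b) - 1 + b * q * (M - 1) / 2
      - b * (b + 1) / 12 * q ^ 2 * (M - 1) * (M - 2) = φ (v + (M - 1) * q) - E + 2 * c * s * η := by
    simp only [φ]
    linear_combination -hmean
  rw [hexpand]
  exact abs_sub_add_mul_le_of_mul_eq hb (by positivity) hK (by linarith) hcp hs hη
    (mul_nonneg (by positivity) (by nlinarith)) (by simp only [p]; nlinarith) hE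
    (hφ _ (hw _ (by linarith) le_rfl)) hmean

namespace SegmentFixed

variable {a L F : ℝ} {N M : ℕ} {x : ℕ → ℝ}

lemma gap_pos (hx : SegmentFixed a L F N x) {k : ℕ} (hk : k + 1 < N) :
    0 < x (k + 2) - x (k + 1) :=
  sub_pos.2 (hx.2.2.1 (k + 1) (by omega) hk)

lemma gap_rpow_neg (hx : SegmentFixed a L F N x) {k : ℕ} (hk : k + 1 < N) :
    (x (k + 2) - x (k + 1)) ^ (-a) = (x 2 - x 1) ^ (-a) + k * F := by
  induction k with
  | zero => simp
  | succ k ih =>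
    have h := hx.2.2.2.1 (k + 2) (by omega) (by omega)
    simp only [fpow, show k + 2 - 1 = k + 1 by omega] at h
    push_cast
    linarith [ih (by omega)]

lemma sum_gaps (hx : SegmentFixed a L F (M + 1) x) :
    ∑ k ∈ range M, (x (k + 2) - x (k + 1)) = L := by
  rw [sum_range_sub (fun k => x (k + 1)), hx.1, hx.2.1, sub_zero]

lemma exists_zero_sum_progression (ha : a ≠ 0) (hL : 0 < L) (hM : 0 < M)
    (hx : SegmentFixed a L F (M + 1) x) :
    ∃ v, (∀ k < M, 0 < 1 + (v + k * ((L / M) ^ a * F))) ∧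
      ∑ k ∈ range M, ((1 + (v + k * ((L / M) ^ a * F))) ^ (-a⁻¹) - 1) = 0 ∧
      (1 + (v + (M - 1) * ((L / M) ^ a * F))) ^ (-a⁻¹) = (x (M + 1) - x M) * M / L := by
  set h := L / M with h_def
  have hh : 0 < h := by positivity
  refine ⟨h ^ a * (x 2 - x 1) ^ (-a) - 1, ?_⟩
  have hbase : ∀ k < M, 1 + (h ^ a * (x 2 - x 1) ^ (-a) - 1 + k * (h ^ a * F))
      = ((x (k + 2) - x (k + 1)) / h) ^ (-a) := by
    intro k hk
    rw [div_rpow (hx.gap_pos (by omega)).le hh.le, hx.gap_rpow_neg (k := k) (by omega),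
      rpow_neg hh.le]
    field_simp
    ring
  have hterm : ∀ k < M, (1 + (h ^ a * (x 2 - x 1) ^ (-a) - 1 + k * (h ^ a * F))) ^ (-a⁻¹)
      = (x (k + 2) - x (k + 1)) / h := by
    intro k hk
    rw [hbase k hk, ← inv_neg,
      rpow_rpow_inv (div_pos (hx.gap_pos (by omega)) hh).le (neg_ne_zero.2 ha)]
  refine ⟨fun k hk => hbase k hk ▸ rpow_pos_of_pos (div_pos (hx.gap_pos (by omega)) hh) _, ?_, ?_⟩
  · rw [sum_congr rfl fun k hk => by rw [hterm k (mem_range.1 hk)], sum_sub_distrib, ← sum_div,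
      hx.sum_gaps]
    rw [h_def]
    field_simp
    simp
  · have := hterm (M - 1) (by omega)
    rw [Nat.cast_pred hM, show M - 1 + 2 = M + 1 by omega, show M - 1 + 1 = M by omega] at this
    rw [this, h_def]
    field_simp

end SegmentFixed

lemma isBigO_sub_one_mul_div_sub_one_rpow {a L F : ℝ} (hL : 0 < L) :
    (fun N : ℕ => ((N : ℝ) - 1) * ((L / ((N : ℝ) - 1)) ^ a * F)) =O[atTop]
      fun N : ℕ => (N : ℝ) ^ (1 - a) := by
  have hequiv : (fun N : ℕ => (N : ℝ) - 1) ~[atTop] fun N : ℕ => (N : ℝ) :=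
    IsEquivalent.refl.sub_isLittleO
      ((isLittleO_const_id_atTop (1 : ℝ)).comp_tendsto tendsto_natCast_atTop_atTop)
  have htheta := hequiv.isTheta.rpow (r := 1 - a)
    (by filter_upwards [eventually_ge_atTop 1] with N hN; simpa using hN)
    (Eventually.of_forall fun N => N.cast_nonneg)
  refine (htheta.isBigO.const_mul_left (L ^ a * F)).congr' ?_ EventuallyEq.rfl
  filter_upwards [eventually_ge_atTop 2] with N hN
  have hN' : (0 : ℝ) < N - 1 := by
    have : (2 : ℝ) ≤ N := by exact_mod_cast hN
    linarith
  rw [div_rpow hL.le hN'.le, rpow_sub hN', rpow_one]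
  field_simp

/-- `J_{N-1}(N)` in the notation of the statement. -/
noncomputable def deltaLastRemainder (a L F : ℝ) (N : ℕ) (y : ℕ → ℝ) : ℝ :=
  ((y N - y (N - 1)) * ((N : ℝ) - 1) / L - 1)
    + a⁻¹ * ((L / ((N : ℝ) - 1)) ^ a * F) * ((N : ℝ) / 2 - 1)
    - (a⁻¹ * (a⁻¹ + 1) / 12) * ((L / ((N : ℝ) - 1)) ^ a * F) ^ 2 * ((N : ℝ) - 2) * ((N : ℝ) - 3)

theorem exists_abs_deltaLastRemainder_le {a L F : ℝ} (ha : 0 < a) (hL : 0 < L) (hF : 0 ≤ F) :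
    ∃ C ε, 0 < ε ∧ ∀ (M : ℕ) (y : ℕ → ℝ), 0 < M → SegmentFixed a L F (M + 1) y →
      M * ((L / M) ^ a * F) ≤ ε →
      |deltaLastRemainder a L F (M + 1) y| ≤ C * (M * ((L / M) ^ a * F)) ^ 3 := by
  obtain ⟨C, ε, hε, hcore⟩ := exists_abs_last_term_sub_expansion_le (inv_pos.2 ha)
  refine ⟨C, ε, hε, fun M y hM hy hsmall => ?_⟩
  obtain ⟨v, hpos, hsum, hlast⟩ := hy.exists_zero_sum_progression ha.ne' hL hM
  have := hcore M v _ hM (by positivity) hsmall hpos hsum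
  rw [hlast] at this
  convert this using 2
  simp only [deltaLastRemainder, Nat.add_sub_cancel]
  push_cast
  rw [add_sub_cancel_right]
  ring

/-- Asymptotic expansion of `δ (N-1)` for the fixed configurations on `[0, L]`:
with `Δ k = (L/(N-1)) (1 + δ k)` and `q = (L/(N-1))^a F`,
`δ (N-1) = -a⁻¹ q (N/2 - 1) + (a⁻¹(a⁻¹+1)/12) q² (N-2)(N-3) + o(N^{-2a+2})`. -/
theorem delta_last_expansion (a L F : ℝ) (ha : 1 < a) (hL : 0 < L) (hF : 0 < F)
    (N₀ : ℕ) (x : ℕ → ℕ → ℝ) (hx : ∀ N ≥ N₀, SegmentFixed a L F N (x N)) :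
    (fun N : ℕ =>
        ((x N N - x N (N - 1)) * ((N : ℝ) - 1) / L - 1)
          + a⁻¹ * ((L / ((N : ℝ) - 1)) ^ a * F) * ((N : ℝ) / 2 - 1)
          - (a⁻¹ * (a⁻¹ + 1) / 12) * ((L / ((N : ℝ) - 1)) ^ a * F) ^ 2
              * ((N : ℝ) - 2) * ((N : ℝ) - 3))
      =o[atTop] (fun N : ℕ => (N : ℝ) ^ (-2 * a + 2)) := by
  obtain ⟨C, ε, hε, hbound⟩ := exists_abs_deltaLastRemainder_le (a := a) (by linarith) hL hF.le
  set p : ℕ → ℝ := fun N => ((N : ℝ) - 1) * ((L / ((N : ℝ) - 1)) ^ a * F) with hp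
  have hpO : p =O[atTop] fun N : ℕ => (N : ℝ) ^ (1 - a) := isBigO_sub_one_mul_div_sub_one_rpow hL
  have hp0 : Tendsto p atTop (𝓝 0) := hpO.trans_tendsto (by
    have := (tendsto_rpow_neg_atTop (by linarith : 0 < a - 1)).comp tendsto_natCast_atTop_atTop
    rwa [neg_sub] at this)
  have hJ : (fun N => deltaLastRemainder a L F N (x N)) =O[atTop] fun N => p N * (p N * p N) := by
    refine IsBigO.of_bound C ?_
    filter_upwards [eventually_ge_atTop (N₀ + 2), hp0.eventually (ge_mem_nhds hε)] with N hN hpN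
    obtain ⟨M, rfl⟩ : ∃ M, N = M + 1 := ⟨N - 1, by omega⟩
    have hpM : p (M + 1) = M * ((L / M) ^ a * F) := by simp [hp]
    rw [hpM] at hpN ⊢
    rw [← pow_three, Real.norm_of_nonneg (by positivity : (0 : ℝ) ≤ (M * ((L / M) ^ a * F)) ^ 3),
      Real.norm_eq_abs]
    exact hbound M (x (M + 1)) (by omega) (hx _ (by omega)) hpN
  refine hJ.trans_isLittleO ?_
  simpa using (isLittleO_one_iff ℝ).2 hp0 |>.mul_isBigO
    (hpO.mul_atTop_rpow_natCast_of_isBigO_rpow _ _ _ hpO (by linarith))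
end

section
/- Fix M > 0, F > 0 and a > 1. For all sufficiently large even N there exists a unique real number m with m = O(1/N) such that, denoting by Δ_1(m) and Δ_{N/2+1}(m) the first and (N/2+1)-th gaps of the unique fixed configuration of N/2 + 2 particles with endpoints 0 and M + m on the segment [0, M + m] with constant force F, the compatibility condition 2m = Δ_1(m) + Δ_{N/2+1}(m) holds. -/
open Real Filter Set Asymptotics

/-!
In a fixed configuration the forces `f(Δ k)` grow by `F` from one gap to the next, so the
configuration is determined by `t = f(Δ 1) ≥ F`: its gaps are `(t + j F)^{-1/a}` and its length
`L(t) = ∑_{j < g} (t + j F)^{-1/a}` is strictly decreasing in `t`. The glueing condition reads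
`2 (L(t) - M) = Δ 1(t) + Δ g(t)`. Lowering `t` increases `L` by at least the increase of
`Δ 1 + Δ g`, so the left side grows strictly faster than the right one: uniqueness. For existence,
the difference of the two sides is `≥ 0` at `t = (g / 4M)^a` (where `g F ≤ t`, true for large `g`
because `a > 1`) and `≤ 0` at `t = (g / M)^a`; beyond `(g / 4M)^a` the first gap, the largest one,
is at most `4M / g`, whence `m = O(1/N)`.
-/

noncomputable def equilibriumGap (a F t : ℝ) (j : ℕ) : ℝ := (t + j * F) ^ (-a⁻¹)

noncomputable def equilibriumLength (a F : ℝ) (g : ℕ) (t : ℝ) : ℝ :=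
  ∑ j ∈ Finset.range g, equilibriumGap a F t j

/-- Particles are indexed from `1`, as in `SegmentFixed`. -/
noncomputable def equilibriumConfig (a F t : ℝ) (k : ℕ) : ℝ :=
  ∑ j ∈ Finset.range (k - 1), equilibriumGap a F t j

/-- `2 m = Δ 1 + Δ (n + 1)` for the equilibrium configuration with `n + 1` gaps and length
`M + m`. -/
def GlueingCondition (a F M : ℝ) (n : ℕ) (t : ℝ) : Prop :=
  2 * (equilibriumLength a F (n + 1) t - M) = equilibriumGap a F t 0 + equilibriumGap a F t n

lemma fpow_rpow_neg_inv {a s : ℝ} (ha : a ≠ 0) (hs : 0 ≤ s) : fpow a (s ^ (-a⁻¹)) = s := by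
  rw [fpow, neg_inv, Real.rpow_inv_rpow hs (neg_ne_zero.2 ha)]

lemma rpow_neg_inv_fpow {a r : ℝ} (ha : a ≠ 0) (hr : 0 ≤ r) : fpow a r ^ (-a⁻¹) = r := by
  rw [fpow, neg_inv, Real.rpow_rpow_inv hr (neg_ne_zero.2 ha)]

lemma rpow_rpow_neg_inv {x a : ℝ} (hx : 0 ≤ x) (ha : a ≠ 0) : (x ^ a) ^ (-a⁻¹) = x⁻¹ := by
  rw [← Real.rpow_mul hx, mul_neg, mul_inv_cancel₀ ha, Real.rpow_neg_one]

section Equilibrium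

variable {a F t s : ℝ}

lemma equilibriumGap_zero (a F t : ℝ) : equilibriumGap a F t 0 = t ^ (-a⁻¹) := by
  simp [equilibriumGap]

lemma equilibriumGap_pos (hF : 0 ≤ F) (ht : 0 < t) (j : ℕ) : 0 < equilibriumGap a F t j :=
  Real.rpow_pos_of_pos (by positivity) _

lemma fpow_equilibriumGap (ha : a ≠ 0) (hF : 0 ≤ F) (ht : 0 < t) (j : ℕ) :
    fpow a (equilibriumGap a F t j) = t + j * F :=
  fpow_rpow_neg_inv ha (by positivity)

lemma equilibriumGap_le_equilibriumGap (ha : 0 < a) (hF : 0 ≤ F) (ht : 0 < t) (hts : t ≤ s)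
    {i j : ℕ} (hij : i ≤ j) : equilibriumGap a F s j ≤ equilibriumGap a F t i := by
  have : (i : ℝ) * F ≤ j * F := by gcongr
  exact Real.rpow_le_rpow_of_nonpos (by positivity) (by linarith)
    (neg_nonpos.2 (inv_nonneg.2 ha.le))

lemma equilibriumGap_lt_equilibriumGap (ha : 0 < a) (hF : 0 ≤ F) (ht : 0 < t) (hts : t < s)
    (j : ℕ) : equilibriumGap a F s j < equilibriumGap a F t j :=
  Real.rpow_lt_rpow_of_neg (by positivity) (by linarith) (neg_neg_of_pos (inv_pos.2 ha))

lemma continuousOn_equilibriumGap (hF : 0 ≤ F) (j : ℕ) :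
    ContinuousOn (fun t ↦ equilibriumGap a F t j) (Ioi 0) :=
  ContinuousOn.rpow_const (by fun_prop) fun _ ht ↦
    Or.inl (add_pos_of_pos_of_nonneg ht (by positivity)).ne'

lemma continuousOn_equilibriumLength (hF : 0 ≤ F) (g : ℕ) :
    ContinuousOn (equilibriumLength a F g) (Ioi 0) :=
  continuousOn_finsetSum _ fun j _ ↦ continuousOn_equilibriumGap hF j

lemma equilibriumLength_strictAntiOn (ha : 0 < a) (hF : 0 ≤ F) {g : ℕ} (hg : g ≠ 0) :
    StrictAntiOn (equilibriumLength a F g) (Ioi 0) := fun _ ht _ _ hts ↦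
  Finset.sum_lt_sum_of_nonempty (Finset.nonempty_range_iff.2 hg)
    fun j _ ↦ equilibriumGap_lt_equilibriumGap ha hF ht hts j

lemma equilibriumLength_le (ha : 0 < a) (hF : 0 ≤ F) (ht : 0 < t) (g : ℕ) :
    equilibriumLength a F g t ≤ g * t ^ (-a⁻¹) := by
  have := Finset.sum_le_card_nsmul (Finset.range g) _ _ fun j _ ↦
    equilibriumGap_le_equilibriumGap ha hF ht le_rfl (Nat.zero_le j)
  rwa [Finset.card_range, nsmul_eq_mul, equilibriumGap_zero] at this

lemma le_equilibriumLength (ha : 0 < a) (hF : 0 ≤ F) (ht : 0 < t) (g : ℕ) :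
    g * equilibriumGap a F t g ≤ equilibriumLength a F g t := by
  have := Finset.card_nsmul_le_sum (Finset.range g) _ _ fun j hj ↦
    equilibriumGap_le_equilibriumGap ha hF ht le_rfl (Finset.mem_range.1 hj).le
  rwa [Finset.card_range, nsmul_eq_mul] at this

lemma equilibriumGap_sub_add_equilibriumGap_sub_le (ha : 0 < a) (hF : 0 ≤ F) (ht : 0 < t)
    (hts : t ≤ s) {g i j : ℕ} (hi : i < g) (hj : j < g) (hij : i ≠ j) :
    (equilibriumGap a F t i - equilibriumGap a F s i) +
        (equilibriumGap a F t j - equilibriumGap a F s j) ≤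
      equilibriumLength a F g t - equilibriumLength a F g s := by
  have hsub : ({i, j} : Finset ℕ) ⊆ Finset.range g := by
    simp [Finset.insert_subset_iff, hi, hj]
  calc _ = ∑ k ∈ {i, j}, (equilibriumGap a F t k - equilibriumGap a F s k) :=
        (Finset.sum_pair hij).symm
    _ ≤ ∑ k ∈ Finset.range g, (equilibriumGap a F t k - equilibriumGap a F s k) :=
        Finset.sum_le_sum_of_subset_of_nonneg hsub fun k _ _ ↦
          sub_nonneg.2 (equilibriumGap_le_equilibriumGap ha hF ht hts le_rfl)
    _ = _ := Finset.sum_sub_distrib _ _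

end Equilibrium

section Segment

variable {a F t : ℝ}

lemma equilibriumConfig_one (a F t : ℝ) : equilibriumConfig a F t 1 = 0 := by
  simp [equilibriumConfig]

lemma equilibriumConfig_succ (a F t : ℝ) (g : ℕ) :
    equilibriumConfig a F t (g + 1) = equilibriumLength a F g t := by
  simp [equilibriumConfig, equilibriumLength]

lemma equilibriumConfig_add_two_sub (a F t : ℝ) (j : ℕ) :
    equilibriumConfig a F t (j + 2) - equilibriumConfig a F t (j + 1) = equilibriumGap a F t j := by
  simp [equilibriumConfig, Finset.sum_range_succ]

lemma segmentFixed_equilibriumConfig (ha : 0 < a) (hF : 0 < F) (ht : F ≤ t) {g : ℕ}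
    (hg : g ≠ 0) :
    SegmentFixed a (equilibriumLength a F g t) F (g + 1) (equilibriumConfig a F t) := by
  have ht0 : 0 < t := hF.trans_le ht
  have hfpow := fpow_equilibriumGap ha.ne' hF.le ht0
  obtain ⟨n, rfl⟩ := Nat.exists_eq_succ_of_ne_zero hg
  refine ⟨equilibriumConfig_one a F t, equilibriumConfig_succ a F t _, ?_, ?_, ?_, ?_⟩
  · intro k hk _
    obtain ⟨j, rfl⟩ := Nat.exists_eq_add_of_le' hk
    linarith [equilibriumConfig_add_two_sub a F t j, equilibriumGap_pos (a := a) hF.le ht0 j]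
  · intro k hk _
    obtain ⟨j, rfl⟩ := Nat.exists_eq_add_of_le' hk
    rw [show j + 2 - 1 = j + 1 by omega, show j + 2 + 1 = (j + 1) + 2 by omega,
      equilibriumConfig_add_two_sub, equilibriumConfig_add_two_sub, hfpow, hfpow]
    push_cast
    ring
  · have := equilibriumConfig_add_two_sub a F t 0
    rw [equilibriumConfig_one, sub_zero] at this
    rw [this, hfpow]
    simpa using ht
  · rw [Nat.add_sub_cancel, ← equilibriumConfig_succ, equilibriumConfig_add_two_sub, hfpow]
    positivity

lemma SegmentFixed.exists_eq_equilibriumGap (ha : 0 < a) {L : ℝ} {g : ℕ} {y : ℕ → ℝ}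
    (hy : SegmentFixed a L F (g + 1) y) :
    ∃ t, F ≤ t ∧ equilibriumLength a F g t = L ∧
      ∀ j < g, y (j + 2) - y (j + 1) = equilibriumGap a F t j := by
  obtain ⟨hy₁, hyL, hmono, hforce, hfirst, -⟩ := hy
  set t := fpow a (y 2 - y 1)
  have hforces : ∀ j < g, fpow a (y (j + 2) - y (j + 1)) = t + j * F := by
    intro j
    induction j with
    | zero => simp [t]
    | succ j ih =>
      intro hj
      have := hforce (j + 2) (by omega) (by omega)
      rw [show j + 2 - 1 = j + 1 by omega] at this
      rw [show j + 1 + 2 = j + 2 + 1 by omega, show j + 1 + 1 = j + 2 by omega]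
      push_cast
      linarith [ih (by omega)]
  have hgaps : ∀ j < g, y (j + 2) - y (j + 1) = equilibriumGap a F t j := fun j hj ↦ by
    rw [equilibriumGap, ← hforces j hj,
      rpow_neg_inv_fpow ha.ne' (sub_nonneg.2 (hmono (j + 1) (by omega) (by omega)).le)]
  refine ⟨t, by simpa [t, hy₁] using hfirst, ?_, hgaps⟩
  rw [← hyL, equilibriumLength, ← sub_zero (y (g + 1)), ← hy₁,
    ← Finset.sum_range_sub (fun i ↦ y (i + 1))]
  exact Finset.sum_congr rfl fun j hj ↦ (hgaps j (Finset.mem_range.1 hj)).symm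

end Segment

section Glueing

variable {a F M : ℝ} {n : ℕ}

lemma GlueingCondition.unique (ha : 0 < a) (hF : 0 ≤ F) (hn : n ≠ 0) {t s : ℝ} (ht : 0 < t)
    (hs : 0 < s) (hglue_t : GlueingCondition a F M n t) (hglue_s : GlueingCondition a F M n s) :
    t = s := by
  wlog hts : t < s generalizing t s
  · rcases (not_lt.1 hts).eq_or_lt with h | h
    · exact h.symm
    · exact (this hs ht hglue_s hglue_t h).symm
  have hlen := equilibriumLength_strictAntiOn ha hF n.succ_ne_zero ht hs hts
  have hgaps := equilibriumGap_sub_add_equilibriumGap_sub_le ha hF ht hts.le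
    (Nat.succ_pos n) n.lt_succ_self (Ne.symm hn) (g := n + 1)
  unfold GlueingCondition at hglue_t hglue_s
  linarith

lemma div_two_le_equilibriumLength (ha : 1 ≤ a) (hF : 0 ≤ F) {c : ℝ} (hc : 0 < c) {g : ℕ}
    (hg : g ≠ 0) (hgrow : g * F ≤ (g / c) ^ a) :
    c / 2 ≤ equilibriumLength a F g ((g / c) ^ a) := by
  have hg0 : (0 : ℝ) < g := by positivity
  have ha0 : a ≠ 0 := by positivity
  have hpos : 0 < (g / c) ^ a := by positivity
  have htwo : (g / c) ^ a + g * F ≤ (g / (c / 2)) ^ a := by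
    have : (2 : ℝ) ≤ 2 ^ a := by
      simpa using Real.rpow_le_rpow_of_exponent_le one_le_two ha
    have hsplit : (g / (c / 2)) ^ a = 2 ^ a * (g / c) ^ a := by
      rw [← Real.mul_rpow zero_le_two (by positivity)]
      field_simp
    rw [hsplit]
    nlinarith
  calc c / 2 = g * ((g / (c / 2)) ^ a) ^ (-a⁻¹) := by
        rw [rpow_rpow_neg_inv (by positivity) ha0, inv_div]; field_simp
    _ ≤ g * equilibriumGap a F ((g / c) ^ a) g := by
        gcongr
        exact Real.rpow_le_rpow_of_nonpos (by positivity) htwo (by simp; positivity)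
    _ ≤ equilibriumLength a F g ((g / c) ^ a) := le_equilibriumLength (by positivity) hF hpos g

lemma GlueingCondition.abs_sub_le (ha : 0 < a) (hF : 0 ≤ F) {t : ℝ} (ht : 0 < t)
    (hglue : GlueingCondition a F M n t) :
    |equilibriumLength a F (n + 1) t - M| ≤ equilibriumGap a F t 0 := by
  unfold GlueingCondition at hglue
  rw [abs_le]
  constructor <;>
  linarith [equilibriumGap_pos (a := a) hF ht 0, equilibriumGap_pos (a := a) hF ht n,
    equilibriumGap_le_equilibriumGap ha hF ht le_rfl (Nat.zero_le n)]

lemma GlueingCondition.exists (ha : 1 ≤ a) (hF : 0 < F) (hM : 0 < M) (hn : 3 ≤ n)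
    (hgrow : ((n + 1 : ℕ) : ℝ) * F ≤ (((n + 1 : ℕ) : ℝ) / (4 * M)) ^ a) :
    ∃ t, F ≤ t ∧ |equilibriumLength a F (n + 1) t - M| ≤ 4 * M / (n + 1 : ℕ) ∧
      GlueingCondition a F M n t := by
  set g : ℕ := n + 1
  have hg4 : (4 : ℝ) ≤ g := by exact_mod_cast (by omega : 4 ≤ g)
  have ha0 : 0 < a := by linarith
  set t₀ := ((g : ℝ) / (4 * M)) ^ a
  set t₁ := ((g : ℝ) / M) ^ a
  have ht₀F : F ≤ t₀ := by nlinarith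
  have ht₀ : 0 < t₀ := hF.trans_le ht₀F
  have ht₁ : 0 < t₁ := by positivity
  have ht₀₁ : t₀ ≤ t₁ := Real.rpow_le_rpow (by positivity)
    (div_le_div_of_nonneg_left (by positivity) hM (by linarith)) ha0.le
  have hgap₀ : equilibriumGap a F t₀ 0 = 4 * M / g := by
    rw [equilibriumGap_zero, rpow_rpow_neg_inv (by positivity) ha0.ne', inv_div]
  set ψ : ℝ → ℝ := fun t ↦
    2 * (equilibriumLength a F g t - M) - (equilibriumGap a F t 0 + equilibriumGap a F t n)
  have hψ₀ : 0 ≤ ψ t₀ := by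
    have hL := div_two_le_equilibriumLength ha hF.le (by positivity : 0 < 4 * M)
      (Nat.succ_ne_zero n) hgrow
    have hlast := equilibriumGap_le_equilibriumGap ha0 hF.le ht₀ le_rfl (Nat.zero_le n)
    have hsmall : 4 * M / g ≤ M := by rw [div_le_iff₀ (by positivity)]; nlinarith
    simp only [ψ]
    linarith
  have hψ₁ : ψ t₁ ≤ 0 := by
    have hL := equilibriumLength_le ha0 hF.le ht₁ g
    rw [rpow_rpow_neg_inv (by positivity) ha0.ne', inv_div, mul_div_cancel₀ _ (by positivity)]
      at hL
    have := equilibriumGap_pos (a := a) hF.le ht₁ 0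
    have := equilibriumGap_pos (a := a) hF.le ht₁ n
    simp only [ψ]
    linarith
  have hcont : ContinuousOn ψ (Icc t₀ t₁) :=
    ((continuousOn_const.mul ((continuousOn_equilibriumLength hF.le g).sub continuousOn_const)).sub
      ((continuousOn_equilibriumGap hF.le 0).add (continuousOn_equilibriumGap hF.le n))).mono
      fun t ht ↦ ht₀.trans_le ht.1
  obtain ⟨t, ⟨ht₀t, -⟩, hψt⟩ := intermediate_value_Icc' ht₀₁ hcont ⟨hψ₁, hψ₀⟩
  have hglue : GlueingCondition a F M n t := sub_eq_zero.1 hψt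
  refine ⟨t, ht₀F.trans ht₀t, ?_, hglue⟩
  calc _ ≤ equilibriumGap a F t 0 := hglue.abs_sub_le ha0 hF.le (ht₀.trans_le ht₀t)
    _ ≤ equilibriumGap a F t₀ 0 := equilibriumGap_le_equilibriumGap ha0 hF.le ht₀ ht₀t le_rfl
    _ = 4 * M / g := hgap₀

lemma eventually_mul_le_div_rpow (ha : 1 < a) (F : ℝ) {c : ℝ} (hc : 0 < c) :
    ∀ᶠ x : ℝ in atTop, x * F ≤ (x / c) ^ a := by
  filter_upwards [(tendsto_rpow_atTop (sub_pos.2 ha)).eventually_ge_atTop (F * c ^ a),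
    eventually_gt_atTop 0] with x hx hx0
  have hca : 0 < c ^ a := by positivity
  rw [Real.div_rpow hx0.le hc.le, le_div_iff₀ hca,
    show x ^ a = x * x ^ (a - 1) by rw [← Real.rpow_one_add' hx0.le (by linarith)]; ring_nf]
  nlinarith

end Glueing

/-- For `M, F > 0` and all sufficiently large even `N`, there is a unique
`m = O(1/N)` such that the fixed configuration of `N/2 + 2` particles on `[0, M + m]` with
constant force `F` satisfies the glueing compatibility condition
`2 m = Δ 1 (m) + Δ (N/2 + 1) (m)`. -/
theorem glueing_parameter_exists_unique (a M F : ℝ) (ha : 1 < a) (hM : 0 < M) (hF : 0 < F) :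
    ∃ C > 0, ∃ N₀ : ℕ, ∀ N ≥ N₀, Even N →
      ∃! m : ℝ, |m| ≤ C / N ∧
        ∃ y : ℕ → ℝ, SegmentFixed a (M + m) F (N / 2 + 2) y ∧
          2 * m = (y 2 - y 1) + (y (N / 2 + 2) - y (N / 2 + 1)) := by
  have ha0 : 0 < a := by linarith
  have hgrow := (tendsto_natCast_atTop_atTop.comp ((tendsto_add_atTop_nat 1).comp
    (Nat.tendsto_div_const_atTop two_ne_zero))).eventually
    (eventually_mul_le_div_rpow ha F (by positivity : 0 < 4 * M))
  obtain ⟨N₀, hN₀⟩ := eventually_atTop.1 ((eventually_ge_atTop 6).and hgrow)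
  refine ⟨8 * M, by positivity, N₀, fun N hN _ ↦ ?_⟩
  obtain ⟨hN6, hNgrow⟩ := hN₀ N hN
  obtain ⟨t, htF, hbound, hglue⟩ :=
    GlueingCondition.exists ha.le hF hM (by omega : 3 ≤ N / 2) hNgrow
  have ht : 0 < t := hF.trans_le htF
  refine ⟨equilibriumLength a F (N / 2 + 1) t - M,
    ⟨hbound.trans ?_, equilibriumConfig a F t, ?_, ?_⟩, ?_⟩
  · rw [div_le_div_iff₀ (by positivity) (by positivity)]
    have : (N : ℝ) ≤ 2 * (N / 2 + 1 : ℕ) := by exact_mod_cast (by omega : N ≤ 2 * (N / 2 + 1))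
    nlinarith
  · simpa using segmentFixed_equilibriumConfig ha0 hF htF (N / 2).succ_ne_zero
  · rw [equilibriumConfig_add_two_sub, equilibriumConfig_add_two_sub]
    exact hglue
  · rintro m ⟨-, y, hy, hm⟩
    obtain ⟨s, hsF, hsL, hgaps⟩ := hy.exists_eq_equilibriumGap ha0 (g := N / 2 + 1)
    have hglue_s : GlueingCondition a F M (N / 2) s := by
      rw [GlueingCondition, hsL, ← hgaps 0 (by omega), ← hgaps (N / 2) (by omega)]
      linarith
    rw [hglue.unique ha0 hF.le (by omega) ht (hF.trans_le hsF) hglue_s, hsL]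
    ring
end
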